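/- Let H be a real Hilbert space containing 3 orthonormal vectors (dim H ≥ 3) and let μ, β ∈ (0,∞). Define ρ₁(μ,β) by: ρ₁ = |1 − β/(β+1)| if β² + μβ + β − μ ≤ 0; ρ₁ = |1 − (1+μβ)/((μ+1)(β+1))| if μβ − μ − β ≥ 1; ρ₁ = |1 − μ/(μ+1)| if μ² + μβ + μ − β ≤ 0; and ρ₁ = (1/2)·(β+μ)/√(βμ(β+μ+1)) if none of these three conditions holds. Then: (i) for every M_μ-resolvent J_A : H → H and every C_β-resolvent J_B : H → H, the operator T z = z − J_B z + J_A(2·J_B z − z) satisfies ‖T z − T z'‖ ≤ ρ₁(μ,β)·‖z − z'‖ for all z, z' ∈ H; and (ii) there exist an M_μ-resolvent J_A, a C_β-resolvent J_B and z ≠ z' in H with ‖T z − T z'‖ ≥ ρ₁(μ,β)·‖z − z'‖. -/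

import Mathlib

/-!
Write `φ = (I - J_B) z - (I - J_B) z'`, `ψ = J_B z - J_B z'` and
`a = J_A (2 J_B z - z) - J_A (2 J_B z' - z')`. Then `z - z' = φ + ψ`, `T z - T z' = φ + a`, and the
two resolvent hypotheses read `β ‖φ‖² ≤ ⟪φ, ψ⟫` and `(1 + μ) ‖a‖² ≤ ⟪a, ψ - φ⟫`. In each of the
four regimes of `ρ`, the difference `ρ² ‖φ + ψ‖² - ‖φ + a‖²` is a nonnegative combination of these
two inequalities and of squared norms of explicit combinations of `a, φ, ψ`.

For tightness, identify a plane in `H` with `ℂ` and let `J_A` and `I - J_B` act on it as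
multiplication by complex numbers `a` and `s` (and as `0` on its orthogonal complement). These are
resolvents of the right kind as soon as `(1 + μ) |a|² ≤ Re a` and `(1 + β) |s|² ≤ Re s`, and `T`
then acts as multiplication by `s + a - 2 a s`; in each regime `a` and `s` can be chosen so that
`|s + a - 2 a s| = ρ`.
-/

open RealInnerProductSpace
open scoped Classical

/-- The tight contraction factor for unrelaxed (`θ = 1`) Douglas–Rachford splitting with
`A` maximal `μ`-strongly monotone and `B` `β`-cocoercive. -/
noncomputable def rhoDRS₁ (μ β : ℝ) : ℝ :=
  if β ^ 2 + μ * β + β - μ ≤ 0 then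
    |1 - β / (β + 1)|
  else if μ * β - μ - β ≥ 1 then
    |1 - (1 + μ * β) / ((μ + 1) * (β + 1))|
  else if μ ^ 2 + μ * β + μ - β ≤ 0 then
    |1 - μ / (μ + 1)|
  else
    1 / 2 * ((β + μ) / Real.sqrt (β * μ * (β + μ + 1)))

/-- `J` is the resolvent of a maximal `μ`-strongly monotone operator. -/
def IsMResolvent {H : Type*} [NormedAddCommGroup H] [InnerProductSpace ℝ H]
    (μ : ℝ) (J : H → H) : Prop :=
  ∀ x y : H, ⟪J x - J y, x - y⟫ ≥ (1 + μ) * ‖J x - J y‖ ^ 2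

/-- `J` is the resolvent of a `β`-cocoercive operator. -/
def IsCResolvent {H : Type*} [NormedAddCommGroup H] [InnerProductSpace ℝ H]
    (β : ℝ) (J : H → H) : Prop :=
  ∀ x y : H, ⟪(x - J x) - (y - J y), J x - J y⟫ ≥ β * ‖(x - J x) - (y - J y)‖ ^ 2

section Resolvent

variable {H : Type*} [NormedAddCommGroup H] [InnerProductSpace ℝ H]

theorem isCResolvent_iff_isMResolvent_id_sub {β : ℝ} {J : H → H} :
    IsCResolvent β J ↔ IsMResolvent β (fun x => x - J x) := by
  refine forall₂_congr fun x y => ?_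
  have hsplit : x - y = ((x - J x) - (y - J y)) + (J x - J y) := by abel
  rw [hsplit, inner_add_right, real_inner_self_eq_norm_sq, ge_iff_le, ge_iff_le]
  constructor <;> intro h <;> linarith

def douglasRachford (JA JB : H → H) (z : H) : H :=
  z - JB z + JA ((2 : ℝ) • JB z - z)

end Resolvent

theorem rhoDRS₁_nonneg {μ β : ℝ} (hμ : 0 < μ) (hβ : 0 < β) : 0 ≤ rhoDRS₁ μ β := by
  unfold rhoDRS₁
  split_ifs <;> positivity

section UpperBound

variable {H : Type*} [NormedAddCommGroup H] [InnerProductSpace ℝ H] {μ β : ℝ} {a φ ψ : H}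

theorem gram_quadratic_form_nonneg (x y w : H) (c d e : ℝ) :
    0 ≤ c ^ 2 * ‖x‖ ^ 2 + d ^ 2 * ‖y‖ ^ 2 + e ^ 2 * ‖w‖ ^ 2
      + 2 * (c * d * ⟪x, y⟫ + c * e * ⟪x, w⟫ + d * e * ⟪y, w⟫) := by
  have h := real_inner_self_nonneg (x := c • x + d • y + e • w)
  simp only [inner_add_left, inner_add_right, real_inner_smul_left, real_inner_smul_right] at h
  rw [real_inner_comm x y, real_inner_comm x w, real_inner_comm y w] at h
  simp only [real_inner_self_eq_norm_sq] at h
  linarith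

theorem sq_norm_add_le_of_regime1 (hμ : 0 < μ) (hβ : 0 < β) (h : β ^ 2 + μ * β + β - μ ≤ 0)
    (hφ : β * ‖φ‖ ^ 2 ≤ ⟪φ, ψ⟫) (ha : (1 + μ) * ‖a‖ ^ 2 ≤ ⟪a, ψ⟫ - ⟪a, φ⟫) :
    (β + 1) ^ 2 * ‖φ + a‖ ^ 2 ≤ ‖φ + ψ‖ ^ 2 := by
  have hβ1 : β < 1 := by nlinarith
  have hD : 0 < (1 + 2 * μ + β) * (1 - β) := by nlinarith
  have hG₁ := gram_quadratic_form_nonneg a φ ψ (1 + 2 * μ + β) β (-1)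
  have hG₂ := gram_quadratic_form_nonneg a φ ψ 0 β (-1)
  refine le_of_mul_le_mul_left ?_ hD
  rw [norm_add_sq_real, norm_add_sq_real, real_inner_comm a φ]
  linear_combination (2 * (1 + 2 * μ + β) * (1 - β) * (β + 1)) * hφ
    + (2 * (1 + 2 * μ + β) * (β + 1) ^ 2) * ha + (β + 1) ^ 2 * hG₁
    + 2 * mul_nonneg (by linarith : 0 ≤ μ - μ * β - β ^ 2 - β) hG₂

theorem sq_norm_add_le_of_regime2 (hμ : 0 < μ) (hβ : 0 < β) (h : μ * β - μ - β ≥ 1)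
    (hφ : β * ‖φ‖ ^ 2 ≤ ⟪φ, ψ⟫) (ha : (1 + μ) * ‖a‖ ^ 2 ≤ ⟪a, ψ⟫ - ⟪a, φ⟫) :
    ((μ + 1) * (β + 1)) ^ 2 * ‖φ + a‖ ^ 2 ≤ (μ + β) ^ 2 * ‖φ + ψ‖ ^ 2 := by
  have hβ1 : 1 < β := by nlinarith
  have hμ1 : 1 ≤ μ := by nlinarith
  have hD : 0 < (β - 1) * (2 * μ + β + 1) := by nlinarith
  have hG₁ := gram_quadratic_form_nonneg a φ ψ ((1 + μ) * (2 * μ + β + 1)) (-(μ * β - 2 * μ - 1))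
    (-(μ + β))
  have hG₂ := gram_quadratic_form_nonneg a φ ψ 0 β (-1)
  refine le_of_mul_le_mul_left ?_ hD
  rw [norm_add_sq_real, norm_add_sq_real, real_inner_comm a φ]
  linear_combination (2 * (μ + β) * (μ - 1) * (1 + β) * (β - 1) * (2 * μ + β + 1)) * hφ
    + (2 * (μ + β) * (1 + μ) * (1 + β) ^ 2 * (2 * μ + β + 1)) * ha + (1 + β) ^ 2 * hG₁
    + (2 * (μ * β - μ - β - 1) * (μ + β) ^ 2) * hG₂

theorem sq_norm_add_le_of_regime3 (hμ : 0 < μ) (hβ : 0 < β) (h : μ ^ 2 + μ * β + μ - β ≤ 0)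
    (hφ : β * ‖φ‖ ^ 2 ≤ ⟪φ, ψ⟫) (ha : (1 + μ) * ‖a‖ ^ 2 ≤ ⟪a, ψ⟫ - ⟪a, φ⟫) :
    (μ + 1) ^ 2 * ‖φ + a‖ ^ 2 ≤ ‖φ + ψ‖ ^ 2 := by
  have hμ1 : μ < 1 := by nlinarith
  have hG := gram_quadratic_form_nonneg a φ ψ (1 + μ) (-μ) (-1)
  rw [norm_add_sq_real, norm_add_sq_real, real_inner_comm a φ]
  linear_combination (2 * (1 - μ)) * hφ + (2 * (1 + μ)) * ha + hG
    + 2 * mul_nonneg (by linarith : 0 ≤ β - μ * β - μ - μ ^ 2) (sq_nonneg ‖φ‖)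

theorem sq_norm_add_le_of_regime4 (hμ : 0 < μ) (hβ : 0 < β)
    (hφ : β * ‖φ‖ ^ 2 ≤ ⟪φ, ψ⟫) (ha : (1 + μ) * ‖a‖ ^ 2 ≤ ⟪a, ψ⟫ - ⟪a, φ⟫) :
    4 * (β * μ * (β + μ + 1)) * ‖φ + a‖ ^ 2 ≤ (β + μ) ^ 2 * ‖φ + ψ‖ ^ 2 := by
  have hG := gram_quadratic_form_nonneg a φ ψ (2 * μ * (β + μ + 1)) (-(β - μ)) (-(β + μ))
  rw [norm_add_sq_real, norm_add_sq_real, real_inner_comm a φ]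
  linear_combination (4 * μ * (β + μ)) * hφ + (4 * μ * (β + μ + 1) * (β + μ)) * ha + hG

theorem norm_add_le_rhoDRS₁_mul (hμ : 0 < μ) (hβ : 0 < β)
    (hφ : β * ‖φ‖ ^ 2 ≤ ⟪φ, ψ⟫) (ha : (1 + μ) * ‖a‖ ^ 2 ≤ ⟪a, ψ⟫ - ⟪a, φ⟫) :
    ‖φ + a‖ ≤ rhoDRS₁ μ β * ‖φ + ψ‖ := by
  refine le_of_pow_le_pow_left₀ two_ne_zero (by positivity [rhoDRS₁_nonneg hμ hβ]) ?_
  rw [mul_pow]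
  unfold rhoDRS₁
  split_ifs with h₁ h₂ h₃
  · rw [sq_abs, show 1 - β / (β + 1) = 1 / (β + 1) by field_simp; ring, div_pow, one_pow,
      one_div_mul_eq_div, le_div_iff₀' (by positivity)]
    exact sq_norm_add_le_of_regime1 hμ hβ h₁ hφ ha
  · rw [sq_abs, show 1 - (1 + μ * β) / ((μ + 1) * (β + 1)) = (μ + β) / ((μ + 1) * (β + 1)) by
      field_simp; ring, div_pow, div_mul_eq_mul_div, le_div_iff₀' (by positivity)]
    exact sq_norm_add_le_of_regime2 hμ hβ h₂ hφ ha
  · rw [sq_abs, show 1 - μ / (μ + 1) = 1 / (μ + 1) by field_simp; ring, div_pow, one_pow,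
      one_div_mul_eq_div, le_div_iff₀' (by positivity)]
    exact sq_norm_add_le_of_regime3 hμ hβ h₃ hφ ha
  · have hs : √(β * μ * (β + μ + 1)) ^ 2 = β * μ * (β + μ + 1) := Real.sq_sqrt (by positivity)
    have hρ : (1 / 2 * ((β + μ) / √(β * μ * (β + μ + 1)))) ^ 2
        = (β + μ) ^ 2 / (4 * (β * μ * (β + μ + 1))) := by
      rw [mul_pow, div_pow (β + μ), hs]
      field_simp
      ring
    rw [hρ, div_mul_eq_mul_div, le_div_iff₀' (by positivity)]
    exact sq_norm_add_le_of_regime4 hμ hβ hφ ha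

theorem norm_douglasRachford_sub_le {JA JB : H → H} (hμ : 0 < μ) (hβ : 0 < β)
    (hA : IsMResolvent μ JA) (hB : IsCResolvent β JB) (z z' : H) :
    ‖douglasRachford JA JB z - douglasRachford JA JB z'‖ ≤ rhoDRS₁ μ β * ‖z - z'‖ := by
  have hA' := hA ((2 : ℝ) • JB z - z) ((2 : ℝ) • JB z' - z')
  rw [show ((2 : ℝ) • JB z - z) - ((2 : ℝ) • JB z' - z')
      = (JB z - JB z') - ((z - JB z) - (z' - JB z')) by module, inner_sub_right] at hA'
  calc ‖douglasRachford JA JB z - douglasRachford JA JB z'‖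
      = ‖((z - JB z) - (z' - JB z'))
          + (JA ((2 : ℝ) • JB z - z) - JA ((2 : ℝ) • JB z' - z'))‖ := by
        unfold douglasRachford; congr 1; abel
    _ ≤ rhoDRS₁ μ β * ‖((z - JB z) - (z' - JB z')) + (JB z - JB z')‖ :=
        norm_add_le_rhoDRS₁_mul hμ hβ (hB z z') hA'
    _ = rhoDRS₁ μ β * ‖z - z'‖ := by congr 2; abel

end UpperBound

section ComplexPlane

variable {H : Type*} [NormedAddCommGroup H] [InnerProductSpace ℝ H]

theorem Orthonormal.nonempty_complex_linearIsometry {e : Fin 2 → H} (he : Orthonormal ℝ e) :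
    Nonempty (ℂ →ₗᵢ[ℝ] H) := by
  let b := Complex.orthonormalBasisOneI
  refine ⟨(b.toBasis.constr ℝ e).isometryOfOrthonormal (v := b.toBasis) (by simp) ?_⟩
  simpa [Function.comp_def] using he

variable (ι : ℂ →ₗᵢ[ℝ] H)

/-- The adjoint of `ι`. -/
noncomputable def planeCoord (x : H) : ℂ :=
  ⟨⟪ι 1, x⟫, ⟪ι Complex.I, x⟫⟩

noncomputable def planeMul (c : ℂ) (x : H) : H :=
  ι (c * planeCoord ι x)

theorem planeCoord_sub (x y : H) : planeCoord ι (x - y) = planeCoord ι x - planeCoord ι y := by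
  apply Complex.ext <;> simp [planeCoord, inner_sub_right]

theorem planeCoord_apply (w : ℂ) : planeCoord ι (ι w) = w := by
  apply Complex.ext <;> simp [planeCoord, LinearIsometry.inner_map_map, Complex.inner]

theorem inner_apply_eq_inner_planeCoord (w : ℂ) (x : H) : ⟪ι w, x⟫ = ⟪w, planeCoord ι x⟫ := by
  have hw : w = w.re • (1 : ℂ) + w.im • Complex.I := by apply Complex.ext <;> simp
  rw [hw, map_add, map_smul, map_smul, inner_add_left, real_inner_smul_left, real_inner_smul_left]
  simp [planeCoord, Complex.inner, mul_comm]

theorem planeMul_sub (c : ℂ) (x y : H) :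
    planeMul ι c x - planeMul ι c y = planeMul ι c (x - y) := by
  simp only [planeMul, planeCoord_sub, mul_sub, map_sub]

theorem planeMul_apply (c w : ℂ) : planeMul ι c (ι w) = ι (c * w) := by
  rw [planeMul, planeCoord_apply]

theorem isMResolvent_planeMul {γ : ℝ} {c : ℂ} (hc : (1 + γ) * ‖c‖ ^ 2 ≤ c.re) :
    IsMResolvent γ (planeMul ι c) := by
  intro x y
  rw [planeMul_sub, planeMul, inner_apply_eq_inner_planeCoord, LinearIsometry.norm_map, norm_mul]
  set u := planeCoord ι (x - y)
  have hinner : ⟪c * u, u⟫ = c.re * ‖u‖ ^ 2 := by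
    simp only [Complex.inner, Complex.sq_norm, Complex.normSq_apply, Complex.mul_re,
      Complex.mul_im, Complex.conj_re, Complex.conj_im]
    ring
  rw [hinner, ge_iff_le, mul_pow, ← mul_assoc]
  exact mul_le_mul_of_nonneg_right hc (sq_nonneg _)

theorem douglasRachford_planeMul_apply (a s w : ℂ) :
    douglasRachford (planeMul ι a) (fun x => x - planeMul ι s x) (ι w)
      = ι ((s + a - 2 * a * s) * w) := by
  have h : (2 : ℝ) • (ι w - ι (s * w)) - ι w = ι (w - 2 * s * w) := by
    rw [← map_sub, ← map_smul, ← map_sub]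
    congr 1
    rw [Complex.real_smul]
    push_cast
    ring
  simp only [douglasRachford, sub_sub_cancel, planeMul_apply, h, ← map_add]
  congr 1
  ring

end ComplexPlane

theorem exists_complex_witness_of_real {μ β ρ p r : ℝ} (hp : (1 + μ) * p ^ 2 ≤ p)
    (hr : (1 + β) * r ^ 2 ≤ r) (hρ : ρ ≤ |r + p - 2 * p * r|) :
    ∃ a s : ℂ, (1 + μ) * ‖a‖ ^ 2 ≤ a.re ∧ (1 + β) * ‖s‖ ^ 2 ≤ s.re ∧
      ρ ≤ ‖s + a - 2 * a * s‖ := by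
  refine ⟨p, r, by simpa using hp, by simpa using hr, ?_⟩
  calc ρ ≤ |r + p - 2 * p * r| := hρ
    _ = ‖((r + p - 2 * p * r : ℝ) : ℂ)‖ := by rw [Complex.norm_real, Real.norm_eq_abs]
    _ = ‖(r : ℂ) + p - 2 * p * r‖ := by push_cast; rfl

theorem exists_complex_witness_of_regime4 {μ β : ℝ} (hμ : 0 < μ) (hβ : 0 < β)
    (h₁ : 0 < β ^ 2 + μ * β + β - μ) (h₂ : μ * β - μ - β < 1) (h₃ : 0 < μ ^ 2 + μ * β + μ - β) :
    ∃ a s : ℂ, (1 + μ) * ‖a‖ ^ 2 ≤ a.re ∧ (1 + β) * ‖s‖ ^ 2 ≤ s.re ∧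
      1 / 2 * ((β + μ) / √(β * μ * (β + μ + 1))) ≤ ‖s + a - 2 * a * s‖ := by
  set K := 4 * (β * μ * (β + μ + 1)) with hK
  set p := (β ^ 2 + μ * β + β - μ) * (1 + μ) / K with hp
  set r := (μ ^ 2 + μ * β + μ - β) * (1 + β) / K with hr
  set v := (β ^ 2 + μ * β + β - μ) * (1 + μ + β - μ * β) * (μ ^ 2 + μ * β + μ - β) / K ^ 2 with hv
  have hm : 0 < 1 + μ + β - μ * β := by linarith
  have hw : √v ^ 2 = v :=
    Real.sq_sqrt (div_nonneg (mul_nonneg (mul_nonneg h₁.le hm.le) h₃.le) (sq_nonneg K))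
  set w := √v
  refine ⟨⟨p, w⟩, ⟨r, w⟩, le_of_eq ?_, le_of_eq ?_, le_of_eq ?_⟩
  · rw [Complex.sq_norm, Complex.normSq_mk, ← sq, ← sq, hw, hv, hp, hK]
    field_simp
    ring
  · rw [Complex.sq_norm, Complex.normSq_mk, ← sq, ← sq, hw, hv, hr, hK]
    field_simp
    ring
  · rw [← sq_eq_sq₀ (by positivity) (norm_nonneg _), Complex.sq_norm]
    have hs : √(β * μ * (β + μ + 1)) ^ 2 = β * μ * (β + μ + 1) := Real.sq_sqrt (by positivity)
    have hn : Complex.normSq (⟨r, w⟩ + ⟨p, w⟩ - 2 * ⟨p, w⟩ * ⟨r, w⟩)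
        = (r + p - 2 * (p * r - w ^ 2)) ^ 2 + w ^ 2 * (2 - 2 * p - 2 * r) ^ 2 := by
      simp [Complex.normSq_apply]
      ring
    rw [hn, hw, mul_pow, div_pow (β + μ), hs, hv, hp, hr, hK]
    field_simp
    ring

theorem exists_complex_witness {μ β : ℝ} (hμ : 0 < μ) (hβ : 0 < β) :
    ∃ a s : ℂ, (1 + μ) * ‖a‖ ^ 2 ≤ a.re ∧ (1 + β) * ‖s‖ ^ 2 ≤ s.re ∧
      rhoDRS₁ μ β ≤ ‖s + a - 2 * a * s‖ := by
  unfold rhoDRS₁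
  split_ifs with h₁ h₂ h₃
  · refine exists_complex_witness_of_real (p := 0) (r := 1 / (β + 1)) (by simp)
      (le_of_eq (by field_simp; ring)) (le_of_eq ?_)
    congr 1
    field_simp
    ring
  · refine exists_complex_witness_of_real (p := 1 / (μ + 1)) (r := 1 / (β + 1))
      (le_of_eq (by field_simp; ring)) (le_of_eq (by field_simp; ring)) (le_of_eq ?_)
    congr 1
    field_simp
    ring
  · refine exists_complex_witness_of_real (p := 1 / (μ + 1)) (r := 0)
      (le_of_eq (by field_simp; ring)) (by simp) (le_of_eq ?_)
    congr 1
    field_simp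
    ring
  · exact exists_complex_witness_of_regime4 hμ hβ (by linarith) (by linarith) (by linarith)

theorem DRS_contraction_coco_strmonotone_unrelaxed_general
    {H : Type*} [NormedAddCommGroup H] [InnerProductSpace ℝ H]
    (hdim : ∃ e : Fin 3 → H, Orthonormal ℝ e)
    {μ β : ℝ} (hμ : 0 < μ) (hβ : 0 < β) :
    (∀ JA JB : H → H, IsMResolvent μ JA → IsCResolvent β JB →
      ∀ z z' : H,
        ‖(z - JB z + JA ((2 : ℝ) • JB z - z)) - (z' - JB z' + JA ((2 : ℝ) • JB z' - z'))‖ ≤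
          rhoDRS₁ μ β * ‖z - z'‖) ∧
    (∃ (JA JB : H → H) (z z' : H), IsMResolvent μ JA ∧ IsCResolvent β JB ∧ z ≠ z' ∧
      ‖(z - JB z + JA ((2 : ℝ) • JB z - z)) - (z' - JB z' + JA ((2 : ℝ) • JB z' - z'))‖ ≥
        rhoDRS₁ μ β * ‖z - z'‖) := by
  refine ⟨fun JA JB hA hB => norm_douglasRachford_sub_le hμ hβ hA hB, ?_⟩
  obtain ⟨e, he⟩ := hdim
  obtain ⟨ι⟩ := (he.comp _ (Fin.castSucc_injective 2)).nonempty_complex_linearIsometry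
  obtain ⟨a, s, ha, hs, hρ⟩ := exists_complex_witness hμ hβ
  have hB : IsCResolvent β fun x => x - planeMul ι s x := by
    rw [isCResolvent_iff_isMResolvent_id_sub]
    simpa only [sub_sub_cancel] using isMResolvent_planeMul ι hs
  refine ⟨planeMul ι a, _, ι 1, ι 0, isMResolvent_planeMul ι ha, hB,
    ι.injective.ne one_ne_zero, ?_⟩
  change ‖douglasRachford (planeMul ι a) (fun x => x - planeMul ι s x) (ι 1)
    - douglasRachford (planeMul ι a) (fun x => x - planeMul ι s x) (ι 0)‖ ≥ _
  rw [douglasRachford_planeMul_apply, douglasRachford_planeMul_apply, ← map_sub, ← map_sub,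
    ι.norm_map, ι.norm_map]
  simpa using hρ

/-- Tight contraction factor of unrelaxed DRS with `A ∈ M_μ`, `B ∈ C_β`:
upper bound for all instances, with a matching lower bound. -/
theorem DRS_contraction_coco_strmonotone_unrelaxed
    {H : Type*} [NormedAddCommGroup H] [InnerProductSpace ℝ H] [CompleteSpace H]
    (hdim : ∃ e : Fin 3 → H, Orthonormal ℝ e)
    {μ β : ℝ} (hμ : 0 < μ) (hβ : 0 < β) :
    (∀ JA JB : H → H, IsMResolvent μ JA → IsCResolvent β JB →
      ∀ z z' : H,
        ‖(z - JB z + JA ((2 : ℝ) • JB z - z)) - (z' - JB z' + JA ((2 : ℝ) • JB z' - z'))‖ ≤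
          rhoDRS₁ μ β * ‖z - z'‖) ∧
    (∃ (JA JB : H → H) (z z' : H), IsMResolvent μ JA ∧ IsCResolvent β JB ∧ z ≠ z' ∧
      ‖(z - JB z + JA ((2 : ℝ) • JB z - z)) - (z' - JB z' + JA ((2 : ℝ) • JB z' - z'))‖ ≥
        rhoDRS₁ μ β * ‖z - z'‖) :=
  DRS_contraction_coco_strmonotone_unrelaxed_general hdim hμ hβ
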